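/- arXiv:2207.14490 — 2 statements merged into one kernel-verified Lean document; each statement's English description precedes it below -/
import Mathlib

section
/- Monotonicity of SHAP values for monotone additive features: let f : (Fin p → ℝ) → ℝ be additive in coordinate j with additive component g : ℝ → ℝ monotone increasing, and fix a background dataset x^(1), …, x^(n) : Fin p → ℝ (n ≥ 1). Then for any two points x, y : Fin p → ℝ with x_j ≤ y_j, the interventional SHAP values of feature j satisfy φ_j(v_x) ≤ φ_j(v_y). -/
/-- The Shapley value of player `j` for the value function `v`. -/
noncomputable def shapley {p : ℕ} (v : Finset (Fin p) → ℝ) (j : Fin p) : ℝ :=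
  ∑ S ∈ (Finset.univ.erase j).powerset,
    (((S.card.factorial * (p - S.card - 1).factorial : ℕ) : ℝ) / (p.factorial : ℝ)) *
      (v (S ∪ {j}) - v S)

/-- `f` does not depend on coordinate `j`: `f x = f y` whenever `x k = y k` for all `k ≠ j`. -/
def NotDependsOn {p : ℕ} (f : (Fin p → ℝ) → ℝ) (j : Fin p) : Prop :=
  ∀ x y : Fin p → ℝ, (∀ k : Fin p, k ≠ j → x k = y k) → f x = f y

/-- The interventional contribution function of the model `f` at point `x`, with
background dataset `X 1, …, X n`: coordinates in `S` are taken from `x`, the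
remaining ones from the background observations. -/
noncomputable def interv {p n : ℕ} (f : (Fin p → ℝ) → ℝ) (X : Fin n → Fin p → ℝ)
    (x : Fin p → ℝ) (S : Finset (Fin p)) : ℝ :=
  (1 / n : ℝ) * ∑ i : Fin n, f (S.piecewise x (X i))

/-!
Adding feature `j` to a coalition `S` changes only coordinate `j` of every interventional
input, from `X i j` to `x j`. For `f = g ∘ (· j) + r` this shifts `f` by `g (x j) - g (X i j)`,
since `r` ignores coordinate `j`. Every marginal contribution of `j` to `v_x` is therefore
the average of these shifts, which is monotone in `x j`; and the Shapley value, having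
nonnegative weights, is monotone in the marginal contributions.
-/

theorem shapley_le_shapley {p : ℕ} {v w : Finset (Fin p) → ℝ} {j : Fin p}
    (h : ∀ S, j ∉ S → v (S ∪ {j}) - v S ≤ w (S ∪ {j}) - w S) :
    shapley v j ≤ shapley w j := by
  refine Finset.sum_le_sum fun S hS => ?_
  have hjS : j ∉ S := fun hj => Finset.notMem_erase j _ (Finset.mem_powerset.mp hS hj)
  exact mul_le_mul_of_nonneg_left (h S hjS) (by positivity)

theorem NotDependsOn.apply_update {p : ℕ} {r : (Fin p → ℝ) → ℝ} {j : Fin p}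
    (hr : NotDependsOn r j) (x : Fin p → ℝ) (a : ℝ) : r (Function.update x j a) = r x :=
  hr _ _ fun _ hk => Function.update_of_ne hk _ _

theorem sub_of_piecewise_union_singleton {p : ℕ} {f : (Fin p → ℝ) → ℝ} {g : ℝ → ℝ}
    {r : (Fin p → ℝ) → ℝ} {j : Fin p} (hr : NotDependsOn r j)
    (hf : ∀ x : Fin p → ℝ, f x = g (x j) + r x) {S : Finset (Fin p)} (hjS : j ∉ S)
    (x b : Fin p → ℝ) :
    f ((S ∪ {j}).piecewise x b) - f (S.piecewise x b) = g (x j) - g (b j) := by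
  rw [Finset.union_singleton, Finset.piecewise_insert, hf, hf, hr.apply_update,
    Function.update_self, Finset.piecewise_eq_of_notMem _ _ _ hjS]
  ring

theorem interv_union_singleton_sub {p n : ℕ} {f : (Fin p → ℝ) → ℝ} {g : ℝ → ℝ}
    {r : (Fin p → ℝ) → ℝ} {j : Fin p} (hr : NotDependsOn r j)
    (hf : ∀ x : Fin p → ℝ, f x = g (x j) + r x) (X : Fin n → Fin p → ℝ) (x : Fin p → ℝ)
    {S : Finset (Fin p)} (hjS : j ∉ S) :
    interv f X x (S ∪ {j}) - interv f X x S = (1 / n : ℝ) * ∑ i, (g (x j) - g (X i j)) := by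
  simp only [interv, ← mul_sub, ← Finset.sum_sub_distrib,
    sub_of_piecewise_union_singleton hr hf hjS]

theorem interventional_shap_monotone_general {p n : ℕ}
    (f : (Fin p → ℝ) → ℝ) (g : ℝ → ℝ) (r : (Fin p → ℝ) → ℝ) (j : Fin p)
    (hg : Monotone g) (hr : NotDependsOn r j)
    (hf : ∀ x : Fin p → ℝ, f x = g (x j) + r x)
    (X : Fin n → Fin p → ℝ) (x y : Fin p → ℝ) (hxy : x j ≤ y j) :
    shapley (interv f X x) j ≤ shapley (interv f X y) j := by
  refine shapley_le_shapley fun S hjS => ?_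
  rw [interv_union_singleton_sub hr hf X x hjS, interv_union_singleton_sub hr hf X y hjS]
  gcongr
  exact hg hxy

/-- Monotonicity of SHAP values for monotone additive features: if `f`
is additive in coordinate `j` with monotone increasing additive component `g`, then for
any two points `x, y` with `x j ≤ y j`, the interventional SHAP values (with respect to
a fixed background dataset of size `n ≥ 1`) satisfy `φ_j(v_x) ≤ φ_j(v_y)`. -/
theorem interventional_shap_monotone {p n : ℕ} (hn : 1 ≤ n)
    (f : (Fin p → ℝ) → ℝ) (g : ℝ → ℝ) (r : (Fin p → ℝ) → ℝ) (j : Fin p)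
    (hg : Monotone g) (hr : NotDependsOn r j)
    (hf : ∀ x : Fin p → ℝ, f x = g (x j) + r x)
    (X : Fin n → Fin p → ℝ) (x y : Fin p → ℝ) (hxy : x j ≤ y j) :
    shapley (interv f X x) j ≤ shapley (interv f X y) j :=
  interventional_shap_monotone_general f g r j hg hr hf X x y hxy
end

section
/- Case-weighted version of Proposition 1: let f : (Fin p → ℝ) → ℝ be additive in coordinate j', let x^(1), …, x^(n) : Fin p → ℝ be a background dataset with positive case weights w_1, …, w_n > 0, define the weighted partial dependence PD_{j'}^w(t) = (Σ_i w_i f(Function.update x^(i) j' t))/(Σ_i w_i) and the weighted interventional contribution function v_x^w(S) = (Σ_i w_i f(S.piecewise x x^(i)))/(Σ_i w_i). Then there exists c ∈ ℝ such that for every point x : Fin p → ℝ, the Shapley value φ_{j'}(v_x^w) equals PD_{j'}^w(x_{j'}) + c. -/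
/-- The case-weighted empirical partial dependence function of feature `j` for the
model `f` with background dataset `X 1, …, X n` and case weights `w`. -/
noncomputable def wpdep {p n : ℕ} (f : (Fin p → ℝ) → ℝ) (X : Fin n → Fin p → ℝ)
    (w : Fin n → ℝ) (j : Fin p) (t : ℝ) : ℝ :=
  (∑ i : Fin n, w i * f (Function.update (X i) j t)) / (∑ i : Fin n, w i)

/-- The case-weighted interventional contribution function of the model `f` at point
`x`, with background dataset `X 1, …, X n` and case weights `w`. -/
noncomputable def winterv {p n : ℕ} (f : (Fin p → ℝ) → ℝ) (X : Fin n → Fin p → ℝ)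
    (w : Fin n → ℝ) (x : Fin p → ℝ) (S : Finset (Fin p)) : ℝ :=
  (∑ i : Fin n, w i * f (S.piecewise x (X i))) / (∑ i : Fin n, w i)

open Finset
open scoped Nat

lemma sum_shapley_weight_eq_one {p : ℕ} (j : Fin p) :
    ∑ S ∈ (univ.erase j).powerset,
      (((S.card ! * (p - S.card - 1)! : ℕ) : ℝ) / (p ! : ℝ)) = 1 := by
  obtain ⟨q, rfl⟩ : ∃ q, p = q + 1 := Nat.exists_eq_succ_of_ne_zero j.pos.ne'
  have hcard : #(univ.erase j) = q := by simp
  rw [sum_powerset_apply_card (fun k => ((k ! * (q + 1 - k - 1)! : ℕ) : ℝ) / (q + 1)!), hcard]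
  calc ∑ k ∈ range (q + 1), q.choose k • (((k ! * (q + 1 - k - 1)! : ℕ) : ℝ) / (q + 1)!)
      = ∑ k ∈ range (q + 1), (1 : ℝ) / (q + 1) := by
        refine sum_congr rfl fun k hk => ?_
        have hkq : k ≤ q := Nat.lt_succ_iff.mp (mem_range.mp hk)
        have hchoose : (q.choose k : ℝ) * ((k ! * (q - k)! : ℕ) : ℝ) = q ! := by
          rw [← Nat.cast_mul, ← mul_assoc, Nat.choose_mul_factorial_mul_factorial hkq]
        rw [nsmul_eq_mul, show q + 1 - k - 1 = q - k by omega, ← mul_div_assoc, hchoose,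
          Nat.factorial_succ, Nat.cast_mul, Nat.cast_succ, div_mul_cancel_right₀ (by positivity),
          one_div]
    _ = 1 := by simp [field]

lemma shapley_eq_of_marginal_eq {p : ℕ} {v : Finset (Fin p) → ℝ} {j : Fin p} {c : ℝ}
    (h : ∀ S : Finset (Fin p), j ∉ S → v (S ∪ {j}) - v S = c) : shapley v j = c := by
  have hmarg : ∀ S ∈ (univ.erase j).powerset, v (S ∪ {j}) - v S = c := fun S hS =>
    h S fun hj => (mem_erase.mp (mem_powerset.mp hS hj)).1 rfl
  rw [shapley, sum_congr rfl fun S hS => by rw [hmarg S hS], ← sum_mul,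
    sum_shapley_weight_eq_one, one_mul]

namespace NotDependsOn

variable {p : ℕ} {r : (Fin p → ℝ) → ℝ} {j : Fin p}

lemma apply_update_s18 (hr : NotDependsOn r j) (x : Fin p → ℝ) (t : ℝ) :
    r (Function.update x j t) = r x :=
  hr _ _ fun _ hk => Function.update_of_ne hk _ _

lemma apply_piecewise_union_singleton (hr : NotDependsOn r j) (S : Finset (Fin p))
    (x y : Fin p → ℝ) : r ((S ∪ {j}).piecewise x y) = r (S.piecewise x y) :=
  hr _ _ fun k hk => by
    by_cases hkS : k ∈ S <;> simp [Finset.piecewise, hkS, hk]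

end NotDependsOn

section Additive

variable {p n : ℕ} {f : (Fin p → ℝ) → ℝ} {g : ℝ → ℝ} {r : (Fin p → ℝ) → ℝ} {j : Fin p}

lemma winterv_marginal_of_additive (hr : NotDependsOn r j)
    (hf : ∀ x : Fin p → ℝ, f x = g (x j) + r x) (X : Fin n → Fin p → ℝ) (w : Fin n → ℝ)
    (x : Fin p → ℝ) {S : Finset (Fin p)} (hjS : j ∉ S) :
    winterv f X w x (S ∪ {j}) - winterv f X w x S
      = (∑ i, w i * (g (x j) - g (X i j))) / ∑ i, w i := by
  rw [winterv, winterv, div_sub_div_same, ← sum_sub_distrib]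
  congr 1
  refine sum_congr rfl fun i _ => ?_
  rw [hf, hf, hr.apply_piecewise_union_singleton, piecewise_eq_of_mem _ _ _ (by simp),
    piecewise_eq_of_notMem _ _ _ hjS]
  ring

lemma wpdep_of_additive (hr : NotDependsOn r j) (hf : ∀ x : Fin p → ℝ, f x = g (x j) + r x)
    (X : Fin n → Fin p → ℝ) (w : Fin n → ℝ) (t : ℝ) :
    wpdep f X w j t = (∑ i, w i * (g t + r (X i))) / ∑ i, w i := by
  simp only [wpdep, hf, Function.update_self, hr.apply_update_s18]

end Additive

theorem weighted_interventional_shap_eq_wpdep_of_additive_general {p n : ℕ}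
    (f : (Fin p → ℝ) → ℝ) (g : ℝ → ℝ) (r : (Fin p → ℝ) → ℝ) (j' : Fin p)
    (hr : NotDependsOn r j') (hf : ∀ x : Fin p → ℝ, f x = g (x j') + r x)
    (X : Fin n → Fin p → ℝ) (w : Fin n → ℝ) :
    ∃ c : ℝ, ∀ x : Fin p → ℝ,
      shapley (winterv f X w x) j' = wpdep f X w j' (x j') + c := by
  refine ⟨-(∑ i, w i * (g (X i j') + r (X i))) / ∑ i, w i, fun x => ?_⟩
  rw [shapley_eq_of_marginal_eq fun S hjS => winterv_marginal_of_additive hr hf X w x hjS,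
    wpdep_of_additive hr hf, neg_div, ← sub_eq_add_neg, div_sub_div_same, ← sum_sub_distrib]
  congr 1
  exact sum_congr rfl fun i _ => by ring

/-- Case-weighted version of Proposition 1: if `f` is additive in
coordinate `j'`, and `X` is a background dataset of size `n ≥ 1` with positive case
weights `w`, then there exists `c ∈ ℝ` such that for every point `x`, the Shapley
value of the weighted interventional contribution function equals
the weighted partial dependence `PD_{j'}^w (x j') + c`. -/
theorem weighted_interventional_shap_eq_wpdep_of_additive {p n : ℕ} (hn : 1 ≤ n)
    (f : (Fin p → ℝ) → ℝ) (g : ℝ → ℝ) (r : (Fin p → ℝ) → ℝ) (j' : Fin p)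
    (hr : NotDependsOn r j') (hf : ∀ x : Fin p → ℝ, f x = g (x j') + r x)
    (X : Fin n → Fin p → ℝ) (w : Fin n → ℝ) (hw : ∀ i : Fin n, 0 < w i) :
    ∃ c : ℝ, ∀ x : Fin p → ℝ,
      shapley (winterv f X w x) j' = wpdep f X w j' (x j') + c :=
  weighted_interventional_shap_eq_wpdep_of_additive_general f g r j' hr hf X w
end
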